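/- There exists an n-Smullyan model which satisfies F-Tarski (there is no M-predicate H with Φ(H) = False_M) but does not satisfy T-Tarski (there is no M-predicate H with Φ(H) = True_M). Concretely, the simple model with Σ = {n, ♯} and Φ(♯) = {X♯n^i : i ∈ ℕ, X ∈ Σ*, the number of occurrences of n in X is odd}, which is an n-Smullyan model, is such a model. -/

import Mathlib

/-- A Smullyan model over a set of symbols `α`: a set `pred` of predicates
(finite strings over `α`) satisfying the prefix-freeness requirement (†), together
with a naming function `phi` assigning a set of strings to each string
(only its values on `pred` are relevant). -/
structure SmullyanModel (α : Type) where
  pred : Set (List α)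
  prefixFree : ∀ H ∈ pred, ∀ X : List α, X ≠ [] → H ++ X ∉ pred
  phi : List α → Set (List α)

namespace SmullyanModel

variable {α : Type} (M : SmullyanModel α)

/-- The set of `M`-sentences: strings of the form `H ++ X` with `H` a predicate. -/
def sent : Set (List α) := {S | ∃ H ∈ M.pred, ∃ X : List α, S = H ++ X}

/-- `Sent_M^+ = Sent_M \ Pred_M`. -/
def sentPlus : Set (List α) := M.sent \ M.pred

/-- `True_M`: the set of true `M`-sentences. -/
def trueSet : Set (List α) := {S | ∃ H ∈ M.pred, ∃ X ∈ M.phi H, S = H ++ X}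

/-- `True_M^+ = True_M \ Pred_M`. -/
def truePlus : Set (List α) := M.trueSet \ M.pred

/-- `False_M = Sent_M \ True_M`. -/
def falseSet : Set (List α) := M.sent \ M.trueSet

/-- `False_M^+ = Sent_M^+ \ True_M^+`. -/
def falsePlus : Set (List α) := M.sentPlus \ M.truePlus

/-- `M ⊨ S`. -/
def Sat (S : List α) : Prop := S ∈ M.trueSet

/-- `S ∈ Sent_M^+` is an `M`-fixed point of `H` if `M ⊨ S ↔ M ⊨ HS`. -/
def IsFixedPoint (H S : List α) : Prop :=
  S ∈ M.sentPlus ∧ (M.Sat S ↔ M.Sat (H ++ S))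

/-- `M` is an `n`-Smullyan model (with negation symbol `n : α`):
for every predicate `H`, `nH` is a predicate and `Φ(nH) = Σ* \ Φ(H)`. -/
def IsNModel (n : α) : Prop :=
  ∀ H ∈ M.pred, (n :: H) ∈ M.pred ∧ M.phi (n :: H) = {X : List α | X ∉ M.phi H}

/-- `M` is an `r`-Smullyan model (with repeat symbol `r : α`):
for every predicate `H`, `rH` is a predicate and `Φ(rH) = {K ∈ Pred : KK ∈ Φ(H)}`. -/
def IsRModel (r : α) : Prop :=
  ∀ H ∈ M.pred, (r :: H) ∈ M.pred ∧
    M.phi (r :: H) = {K : List α | K ∈ M.pred ∧ K ++ K ∈ M.phi H}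

/-- FPT: every `M`-predicate has an `M`-fixed point. -/
def FPT : Prop := ∀ H ∈ M.pred, ∃ S : List α, M.IsFixedPoint H S

/-- T-Tarski: no `M`-predicate names `True_M`. -/
def TTarski : Prop := ¬ ∃ H ∈ M.pred, M.phi H = M.trueSet

/-- F-Tarski: no `M`-predicate names `False_M`. -/
def FTarski : Prop := ¬ ∃ H ∈ M.pred, M.phi H = M.falseSet

/-- T-Tarski⁺: there is no `M`-predicate `H` with `True_M⁺ = Φ(H) ∩ Sent_M⁺`. -/
def TTarskiPlus : Prop := ¬ ∃ H ∈ M.pred, M.truePlus = M.phi H ∩ M.sentPlus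

/-- F-Tarski⁺: there is no `M`-predicate `H` with `False_M⁺ = Φ(H) ∩ Sent_M⁺`. -/
def FTarskiPlus : Prop := ¬ ∃ H ∈ M.pred, M.falsePlus = M.phi H ∩ M.sentPlus

/-- mG1. -/
def MG1 : Prop :=
  ∀ H ∈ M.pred, M.phi H ⊆ M.trueSet →
    ∃ S ∈ M.sent, M.Sat S ∧ S ∉ M.phi H

/-- mG1⁺. -/
def MG1Plus : Prop :=
  ∀ H ∈ M.pred, M.phi H ∩ M.sentPlus ⊆ M.truePlus →
    ∃ S ∈ M.sentPlus, M.Sat S ∧ S ∉ M.phi H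

/-- G1 (for `n`-Smullyan models). -/
def G1 (n : α) : Prop :=
  ∀ H ∈ M.pred, M.phi H ⊆ M.trueSet →
    ∃ S ∈ M.sent, S ∉ M.phi H ∧ (n :: S) ∉ M.phi H

/-- G1⁺ (for `n`-Smullyan models). -/
def G1Plus (n : α) : Prop :=
  ∀ H ∈ M.pred, M.phi H ∩ M.sentPlus ⊆ M.truePlus →
    ∃ S ∈ M.sentPlus, S ∉ M.phi H ∧ (n :: S) ∉ M.phi H

/-- The predicate set of a simple model: strings `X♯` where `X` contains no `♯`. -/
def simplePred (sharp : α) : Set (List α) :=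
  {L | ∃ X : List α, sharp ∉ X ∧ L = X ++ [sharp]}

end SmullyanModel

inductive SmSym where
  | n
  | sharp
deriving DecidableEq


/-!
Take `Φ(nᵏ♯) = Φ(♯)` for even `k` and its complement for odd `k`. Whether `nᵏ♯Z` lies in `Φ(♯)`
is decided by its last `♯`, and works out to `Z ∈ Φ(♯) ↔ k even`, which is exactly the truth
of `nᵏ♯Z`; hence `True_M = Φ(♯)` and T-Tarski fails. F-Tarski holds because every `Φ(H)`
contains either the empty string, which is no sentence, or the true sentence `n♯`.
-/

theorem SmullyanModel.simplePred_prefixFree {α : Type} (sharp : α) :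
    ∀ H ∈ simplePred sharp, ∀ X : List α, X ≠ [] → H ++ X ∉ simplePred sharp := by
  rintro _ ⟨X, -, rfl⟩ Y hY ⟨X', hX', hE⟩
  obtain ⟨Z, a, rfl⟩ := (List.eq_nil_or_concat Y).resolve_left hY
  rw [List.concat_eq_append, ← List.append_assoc, List.append_assoc X, List.singleton_append,
    List.append_singleton_inj] at hE
  have hsplit : X' = X ++ sharp :: Z := by simpa using hE.1.symm
  exact hX' (by simp [hsplit])

namespace SimpleNModel

open SmullyanModel SmSym

def phiSharp : Set (List SmSym) :=
  {L | ∃ X : List SmSym, ∃ i : ℕ, Odd (X.count n) ∧ L = X ++ sharp :: List.replicate i n}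

lemma nil_not_mem_phiSharp : [] ∉ phiSharp := by
  rintro ⟨X, i, -, h⟩
  simp at h

lemma append_n_mem_phiSharp_iff (L : List SmSym) : L ++ [n] ∈ phiSharp ↔ L ∈ phiSharp := by
  constructor
  · rintro ⟨X, i, hX, h⟩
    cases i with
    | zero => simp at h
    | succ i =>
      rw [List.replicate_succ', ← List.cons_append, ← List.append_assoc,
        List.append_singleton_inj] at h
      exact ⟨X, i, hX, h.1⟩
  · rintro ⟨X, i, hX, rfl⟩
    exact ⟨X, i + 1, hX, by simp [List.replicate_succ']⟩

lemma append_sharp_mem_phiSharp_iff (L : List SmSym) :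
    L ++ [sharp] ∈ phiSharp ↔ Odd (L.count n) := by
  constructor
  · rintro ⟨X, i, hX, h⟩
    cases i with
    | zero => simp_all
    | succ i =>
      rw [List.replicate_succ', ← List.cons_append, ← List.append_assoc,
        List.append_singleton_inj] at h
      cases h.2
  · intro hL
    exact ⟨L, 0, hL, rfl⟩

/-- The last `♯` lies in `Z` if `Z` contains one; otherwise it is the displayed one. -/
lemma append_sharp_append_mem_phiSharp_iff (P Z : List SmSym) :
    P ++ sharp :: Z ∈ phiSharp ↔ (Z ∈ phiSharp ↔ Even (P.count n)) := by
  induction Z using List.reverseRecOn with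
  | nil =>
    simp [append_sharp_mem_phiSharp_iff, nil_not_mem_phiSharp, Nat.not_even_iff_odd]
  | append_singleton Z a ih =>
    have hassoc : P ++ sharp :: (Z ++ [a]) = (P ++ sharp :: Z) ++ [a] := by simp
    rw [hassoc]
    cases a with
    | n => rwa [append_n_mem_phiSharp_iff, append_n_mem_phiSharp_iff]
    | sharp =>
      simp only [append_sharp_mem_phiSharp_iff, List.count_append]
      simp [Nat.odd_add']

def model : SmullyanModel SmSym where
  pred := simplePred sharp
  prefixFree := simplePred_prefixFree sharp
  phi H := {Y | Y ∈ phiSharp ↔ Even (H.count n)}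

lemma model_isNModel : model.IsNModel n := by
  rintro _ ⟨X, hX, rfl⟩
  refine ⟨⟨n :: X, by simpa using hX, rfl⟩, ?_⟩
  ext Y
  simp only [model, List.count_cons_self, Nat.even_add_one, Set.mem_ofPred_eq]
  tauto

lemma model_phi_sharp : model.phi [sharp] = phiSharp := by
  ext Y
  simp [model]

lemma model_trueSet : model.trueSet = phiSharp := by
  ext T
  constructor
  · rintro ⟨_, ⟨X, -, rfl⟩, Y, hY, rfl⟩
    simpa [model, append_sharp_append_mem_phiSharp_iff] using hY
  · intro hT
    have hsharp : sharp ∈ T := by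
      obtain ⟨X, i, -, rfl⟩ := hT
      simp
    obtain ⟨X, Y, hX, rfl, -⟩ := List.exists_erase_eq hsharp
    refine ⟨X ++ [sharp], ⟨X, hX, rfl⟩, Y, ?_, by simp⟩
    simpa [model, append_sharp_append_mem_phiSharp_iff] using hT

lemma model_fTarski : model.FTarski := by
  rintro ⟨H, -, hH⟩
  have h_nil : [] ∉ model.falseSet := by
    rintro ⟨⟨_, ⟨X, -, rfl⟩, Y, hY⟩, -⟩
    simp at hY
  have h_nsharp : [n, sharp] ∈ phiSharp := ⟨[n], 0, by simp, rfl⟩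
  have h_nsharp_false : [n, sharp] ∉ model.falseSet := fun h =>
    h.2 (model_trueSet ▸ h_nsharp)
  by_cases hpar : Even (H.count n)
  · exact h_nsharp_false (hH ▸ show [n, sharp] ∈ model.phi H by simp [model, h_nsharp, hpar])
  · exact h_nil (hH ▸ show [] ∈ model.phi H by simp [model, nil_not_mem_phiSharp, hpar])

end SimpleNModel

open SimpleNModel in
/-- There is an `n`-simple model (Σ = {n, ♯},
Φ(♯) = {X♯n^i : i ∈ ℕ, the number of occurrences of n in X is odd})
satisfying F-Tarski but not T-Tarski. -/
theorem stmt_18 :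
    ∃ M : SmullyanModel SmSym,
      M.pred = SmullyanModel.simplePred SmSym.sharp ∧
      M.IsNModel SmSym.n ∧
      M.phi [SmSym.sharp] =
        {L : List SmSym | ∃ X : List SmSym, ∃ i : ℕ, Odd (X.count SmSym.n) ∧
          L = X ++ SmSym.sharp :: List.replicate i SmSym.n} ∧
      M.FTarski ∧
      ¬ M.TTarski := by
  refine ⟨model, rfl, model_isNModel, model_phi_sharp, model_fTarski, fun h => h ?_⟩
  exact ⟨[SmSym.sharp], ⟨[], by simp, rfl⟩, model_phi_sharp.trans model_trueSet.symm⟩
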